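/- Suppose α(m) is a nonnegative sequence with Σ_{m≥1} m^λ α(m)^{1−2/δ} < ∞ for some λ > 1 − 2/δ and δ > 2, and suppose C > 0. Let h_n → 0 and set m_n = (h_n² |log h_n²|)^{-1}. Then m_n → ∞, m_n h_n² → 0, and Σ_{j=m_n+1}^{n} |c_j| → 0 whenever |c_j| ≤ C α(j)^{1−2/δ} h_n^{4/δ−2} for all j, provided h_n satisfies n h_n^{(λ+2−2/δ)/(λ+2/δ)} = O(n^{ε₀}) for some ε₀ > 0. -/

import Mathlib

/-!
On the tail `j > m_n` we have `1 ≤ (j / m_n)^λ`, so `Σ_{j > m_n} α(j)^{1-2/δ} ≤ m_n^{-λ} S` with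
`S = Σ j^λ α(j)^{1-2/δ}`. Hence the tail sum is at most a constant times
`h_n^{4/δ-2} m_n^{-λ} = x^{λ+2/δ-1} |log x|^λ` with `x = h_n²`, which tends to `0` because
`λ + 2/δ - 1 > 0` and a positive power of `x` beats any power of `|log x|` as `x → 0⁺`.
-/

open Filter Topology Real Finset

lemma tendsto_rpow_mul_abs_log_rpow_nhdsGT_zero {a : ℝ} (ha : 0 < a) (b : ℝ) :
    Tendsto (fun x => x ^ a * |log x| ^ b) (𝓝[>] 0) (𝓝 0) :=
  (isLittleO_abs_log_rpow_rpow_nhdsGT_zero b (neg_lt_zero.2 ha)).tendsto_div_nhds_zero.congr'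
    (eventually_mem_nhdsWithin.mono fun x hx => by
      rw [rpow_neg (le_of_lt hx), div_inv_eq_mul, mul_comm])

lemma tendsto_rpow_mul_rpow_mul_abs_log_nhdsGT_zero {a b : ℝ} (hab : 0 < a + b) :
    Tendsto (fun x => x ^ a * (x * |log x|) ^ b) (𝓝[>] 0) (𝓝 0) :=
  (tendsto_rpow_mul_abs_log_rpow_nhdsGT_zero hab b).congr'
    (eventually_mem_nhdsWithin.mono fun x (hx : 0 < x) => by
      dsimp only
      rw [mul_rpow hx.le (abs_nonneg _), ← mul_assoc, rpow_add hx])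

lemma tendsto_mul_abs_log_nhdsGT_zero :
    Tendsto (fun x => x * |log x|) (𝓝[>] 0) (𝓝[>] 0) := by
  refine tendsto_nhdsWithin_iff.2 ⟨?_, ?_⟩
  · simpa using tendsto_rpow_mul_rpow_mul_abs_log_nhdsGT_zero (a := 0) (b := 1) (by norm_num)
  · filter_upwards [Ioo_mem_nhdsGT one_pos] with x hx
    exact mul_pos hx.1 (abs_pos.2 (log_neg hx.1 hx.2).ne)

lemma half_le_natFloor {y : ℝ} (hy : 1 ≤ y) : y / 2 ≤ ⌊y⌋₊ := by
  have hfloor : (1 : ℝ) ≤ ⌊y⌋₊ := by exact_mod_cast Nat.one_le_floor_iff _ |>.2 hy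
  linarith [Nat.sub_one_lt_floor y]

lemma natFloor_rpow_neg_le {y lam : ℝ} (hy : 1 ≤ y) (hlam : 0 ≤ lam) :
    (⌊y⌋₊ : ℝ) ^ (-lam) ≤ 2 ^ lam * y ^ (-lam) := by
  calc (⌊y⌋₊ : ℝ) ^ (-lam) ≤ (y / 2) ^ (-lam) :=
        rpow_le_rpow_of_nonpos (by linarith) (half_le_natFloor hy) (neg_nonpos.2 hlam)
    _ = 2 ^ lam * y ^ (-lam) := by
        rw [div_rpow (by linarith) zero_le_two, rpow_neg zero_le_two, div_inv_eq_mul, mul_comm]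

lemma sum_le_rpow_neg_mul_tsum {a : ℕ → ℝ} (ha : ∀ j, 0 ≤ a j) {lam : ℝ} (hlam : 0 ≤ lam)
    (hs : Summable fun j : ℕ => (j : ℝ) ^ lam * a j) {M : ℕ} (hM : 0 < M) {s : Finset ℕ}
    (hsM : ∀ j ∈ s, M ≤ j) :
    ∑ j ∈ s, a j ≤ (M : ℝ) ^ (-lam) * ∑' j : ℕ, (j : ℝ) ^ lam * a j := by
  have hM' : (0 : ℝ) < M := by exact_mod_cast hM
  have hterm : ∀ j ∈ s, a j ≤ (M : ℝ) ^ (-lam) * ((j : ℝ) ^ lam * a j) := fun j hj => by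
    calc a j = (M : ℝ) ^ (-lam) * ((M : ℝ) ^ lam * a j) := by
          rw [← mul_assoc, ← rpow_add hM', neg_add_cancel, rpow_zero, one_mul]
      _ ≤ (M : ℝ) ^ (-lam) * ((j : ℝ) ^ lam * a j) := by
          gcongr
          · exact ha j
          · exact_mod_cast hsM j hj
  calc ∑ j ∈ s, a j ≤ ∑ j ∈ s, (M : ℝ) ^ (-lam) * ((j : ℝ) ^ lam * a j) := sum_le_sum hterm
    _ ≤ (M : ℝ) ^ (-lam) * ∑' j : ℕ, (j : ℝ) ^ lam * a j := by
        rw [← mul_sum]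
        gcongr
        exact hs.sum_le_tsum _ fun j _ => mul_nonneg (by positivity) (ha j)

lemma sum_Ioc_natFloor_abs_le {a : ℕ → ℝ} (ha : ∀ j, 0 ≤ a j) {lam : ℝ} (hlam : 0 ≤ lam)
    (hs : Summable fun j : ℕ => (j : ℝ) ^ lam * a j) {K : ℝ} (hK : 0 ≤ K) {c : ℕ → ℝ}
    (hc : ∀ j, |c j| ≤ K * a j) {y : ℝ} (hy : 1 ≤ y) (n : ℕ) :
    ∑ j ∈ Ioc ⌊y⌋₊ n, |c j| ≤ K * 2 ^ lam * y ^ (-lam) * ∑' j : ℕ, (j : ℝ) ^ lam * a j := by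
  have hM : 0 < ⌊y⌋₊ := Nat.floor_pos.2 hy
  calc ∑ j ∈ Ioc ⌊y⌋₊ n, |c j| ≤ K * ∑ j ∈ Ioc ⌊y⌋₊ n, a j := by
        rw [mul_sum]; exact sum_le_sum fun j _ => hc j
    _ ≤ K * ((⌊y⌋₊ : ℝ) ^ (-lam) * ∑' j : ℕ, (j : ℝ) ^ lam * a j) := by
        gcongr
        exact sum_le_rpow_neg_mul_tsum ha hlam hs hM fun j hj => (mem_Ioc.1 hj).1.le
    _ ≤ K * (2 ^ lam * y ^ (-lam) * ∑' j : ℕ, (j : ℝ) ^ lam * a j) := by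
        gcongr
        · exact tsum_nonneg fun j => mul_nonneg (by positivity) (ha j)
        · exact natFloor_rpow_neg_le hy hlam
    _ = K * 2 ^ lam * y ^ (-lam) * ∑' j : ℕ, (j : ℝ) ^ lam * a j := by ring

theorem covariance_tail_sum_vanishes_general
    (δ lam : ℝ) (hδ : 2 < δ) (hlam : 1 - 2 / δ < lam)
    (α : ℕ → ℝ) (hα : ∀ m, 0 ≤ α m)
    (hsum : Summable (fun m : ℕ => (m : ℝ) ^ lam * α m ^ (1 - 2 / δ)))
    (C : ℝ) (hC : 0 < C)
    (h : ℕ → ℝ) (hpos : ∀ n, 0 < h n)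
    (hto : Tendsto h atTop (𝓝 0))
    (mR : ℕ → ℝ) (hmR : ∀ n, mR n = (h n ^ 2 * |Real.log (h n ^ 2)|)⁻¹)
    (m : ℕ → ℕ) (hm : ∀ n, m n = ⌊mR n⌋₊)
    (c : ℕ → ℕ → ℝ)
    (hc : ∀ n j, |c n j| ≤ C * α j ^ (1 - 2 / δ) * h n ^ (4 / δ - 2)) :
    Tendsto mR atTop atTop ∧
    Tendsto (fun n => mR n * h n ^ 2) atTop (𝓝 0) ∧
    Tendsto (fun n => ∑ j ∈ Finset.Ioc (m n) n, |c n j|) atTop (𝓝 0) := by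
  have hβ : 0 < 1 - 2 / δ := by linarith [(div_lt_one (by linarith : (0 : ℝ) < δ)).2 hδ]
  have hx : Tendsto (fun n => h n ^ 2) atTop (𝓝[>] 0) :=
    tendsto_nhdsWithin_iff.2 ⟨by simpa using hto.pow 2, .of_forall fun n => pow_pos (hpos n) 2⟩
  have hmR_top : Tendsto mR atTop atTop :=
    (tendsto_mul_abs_log_nhdsGT_zero.comp hx).inv_tendsto_nhdsGT_zero.congr
      fun n => (hmR n).symm
  refine ⟨hmR_top, ?_, ?_⟩
  · have hmR_mul : ∀ n, mR n * h n ^ 2 = |log (h n ^ 2)|⁻¹ := fun n => by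
      rw [hmR, mul_inv, mul_right_comm, inv_mul_cancel₀ (pow_pos (hpos n) 2).ne', one_mul]
    exact (tendsto_abs_atBot_atTop.comp (tendsto_log_nhdsGT_zero.comp hx)).inv_tendsto_atTop.congr
      fun n => (hmR_mul n).symm
  · set S := ∑' j : ℕ, (j : ℝ) ^ lam * α j ^ (1 - 2 / δ)
    have hrate := ((tendsto_rpow_mul_rpow_mul_abs_log_nhdsGT_zero (a := 2 / δ - 1) (b := lam)
      (by linarith)).comp hx).const_mul (C * 2 ^ lam * S)
    rw [mul_zero] at hrate
    refine squeeze_zero' (.of_forall fun n => sum_nonneg fun j _ => abs_nonneg _) ?_ hrate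
    filter_upwards [hmR_top.eventually_ge_atTop 1] with n hn
    have hpow : h n ^ (4 / δ - 2) = (h n ^ 2) ^ (2 / δ - 1) := by
      rw [← rpow_natCast, ← rpow_mul (hpos n).le]
      ring_nf
    calc ∑ j ∈ Ioc (m n) n, |c n j|
        ≤ C * h n ^ (4 / δ - 2) * 2 ^ lam * mR n ^ (-lam) * S := by
          rw [hm]
          exact sum_Ioc_natFloor_abs_le (a := fun j => α j ^ (1 - 2 / δ))
            (fun j => rpow_nonneg (hα j) _) (hβ.le.trans hlam.le) hsum
            (mul_nonneg hC.le (rpow_nonneg (hpos n).le _))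
            (fun j => (hc n j).trans_eq (by ring)) hn n
      _ = C * 2 ^ lam * S * ((h n ^ 2) ^ (2 / δ - 1) * (h n ^ 2 * |log (h n ^ 2)|) ^ lam) := by
          rw [hmR, rpow_neg (by positivity), inv_rpow (by positivity), inv_inv, hpow]
          ring

/-- The summability argument controlling the covariances of distant terms:
with `m_n = (h_n² |log h_n²|)⁻¹`, `m_n → ∞`, `m_n h_n² → 0`, and the tail sum
`Σ_{j=m_n+1}^n |c_j|` tends to `0` under the bound `|c_j| ≤ C α(j)^{1−2/δ} h_n^{4/δ−2}`. -/
theorem covariance_tail_sum_vanishes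
    (δ lam : ℝ) (hδ : 2 < δ) (hlam : 1 - 2 / δ < lam)
    (α : ℕ → ℝ) (hα : ∀ m, 0 ≤ α m)
    (hsum : Summable (fun m : ℕ => (m : ℝ) ^ lam * α m ^ (1 - 2 / δ)))
    (C : ℝ) (hC : 0 < C)
    (h : ℕ → ℝ) (hpos : ∀ n, 0 < h n) (hlt : ∀ n, h n < 1)
    (hto : Tendsto h atTop (𝓝 0))
    (ε₀ : ℝ) (hε₀ : 0 < ε₀)
    (hband : (fun n : ℕ => (n : ℝ) * h n ^ ((lam + 2 - 2 / δ) / (lam + 2 / δ)))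
      =O[atTop] (fun n : ℕ => (n : ℝ) ^ ε₀))
    (mR : ℕ → ℝ) (hmR : ∀ n, mR n = (h n ^ 2 * |Real.log (h n ^ 2)|)⁻¹)
    (m : ℕ → ℕ) (hm : ∀ n, m n = ⌊mR n⌋₊)
    (c : ℕ → ℕ → ℝ)
    (hc : ∀ n j, |c n j| ≤ C * α j ^ (1 - 2 / δ) * h n ^ (4 / δ - 2)) :
    Tendsto mR atTop atTop ∧
    Tendsto (fun n => mR n * h n ^ 2) atTop (𝓝 0) ∧
    Tendsto (fun n => ∑ j ∈ Finset.Ioc (m n) n, |c n j|) atTop (𝓝 0) :=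
  covariance_tail_sum_vanishes_general δ lam hδ hlam α hα hsum C hC h hpos hto mR hmR m hm c hc
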